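/- Let d ≥ 1, let Ω ⊆ ℝ^d be a bounded open set, let b > 0 be real, and let ρ : ℝ^d → ℝ be a C² function with ‖∇ρ(x)‖ ≤ 1 and Δρ(x) ≥ b for every x ∈ Ω. Suppose moreover that for every g ∈ C_c^∞(Ω) one has ∫_Ω |Δg|² dx ≥ (b²/4)² · ∫_Ω g² dx. Then for every natural number m ≥ 0 and every f ∈ C_c^∞(Ω), one has ∫_Ω ‖∇(Δ^m f)(x)‖² dx ≥ (b/2)^{4m+2} · ∫_Ω f(x)² dx. -/

import Mathlib

open MeasureTheory

/-- The Euclidean Laplacian: the sum of the second partial derivatives. -/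
noncomputable def eucLap {d : ℕ} (f : EuclideanSpace ℝ (Fin d) → ℝ) :
    EuclideanSpace ℝ (Fin d) → ℝ := fun x =>
  ∑ i, fderiv ℝ (fun y => fderiv ℝ f y (EuclideanSpace.single i 1)) x
    (EuclideanSpace.single i 1)

section Aux

variable {d : ℕ}

local notation "𝔼" => EuclideanSpace ℝ (Fin d)

lemma pderiv_contDiff {f : 𝔼 → ℝ} (hf : ContDiff ℝ (⊤ : ℕ∞) f) (v : 𝔼) :
    ContDiff ℝ (⊤ : ℕ∞) (fun x => fderiv ℝ f x v) :=
  (hf.fderiv_right (by simp)).clm_apply contDiff_const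

lemma pderiv_tsupport {f : 𝔼 → ℝ} (v : 𝔼) :
    tsupport (fun x => fderiv ℝ f x v) ⊆ tsupport f := by
  apply closure_minimal _ isClosed_closure
  intro x hx
  by_contra hmem
  apply hx
  simp only [Function.mem_support, ne_eq, not_not] at *
  rw [fderiv_of_notMem_tsupport ℝ hmem]
  rfl

lemma eucLap_zero_of_nmem {g : 𝔼 → ℝ} {x : 𝔼} (hx : x ∉ tsupport g) : eucLap g x = 0 := by
  apply Finset.sum_eq_zero
  intro i _
  have h1 : x ∉ tsupport (fun y => fderiv ℝ g y (EuclideanSpace.single i 1)) :=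
    fun h => hx (pderiv_tsupport _ h)
  rw [fderiv_of_notMem_tsupport ℝ h1]
  rfl

lemma eucLap_tsupport {g : 𝔼 → ℝ} : tsupport (eucLap g) ⊆ tsupport g := by
  apply closure_minimal _ isClosed_closure
  intro x hx
  by_contra hmem
  exact hx (eucLap_zero_of_nmem hmem)

lemma eucLap_contDiff {g : 𝔼 → ℝ} (hg : ContDiff ℝ (⊤ : ℕ∞) g) : ContDiff ℝ (⊤ : ℕ∞) (eucLap g) := by
  unfold eucLap
  exact ContDiff.sum fun i _ => pderiv_contDiff (pderiv_contDiff hg _) _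

lemma eucLap_hcs {g : 𝔼 → ℝ} (hg : HasCompactSupport g) : HasCompactSupport (eucLap g) :=
  hg.mono' (subset_trans subset_closure eucLap_tsupport)

lemma grad_inner {f : 𝔼 → ℝ} (x v : 𝔼) :
    fderiv ℝ f x v = inner ℝ (gradient f x) v := by
  rw [gradient, ← InnerProductSpace.toDual_apply_apply, LinearIsometryEquiv.apply_symm_apply]

lemma grad_coord {f : 𝔼 → ℝ} (x : 𝔼) (i : Fin d) :
    gradient f x i = fderiv ℝ f x (EuclideanSpace.single i 1) := by
  rw [grad_inner, EuclideanSpace.inner_single_right]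
  simp

lemma grad_zero_of_nmem {f : 𝔼 → ℝ} {x : 𝔼} (hx : x ∉ tsupport f) : gradient f x = 0 := by
  rw [gradient, fderiv_of_notMem_tsupport ℝ hx, map_zero]

lemma grad_continuous' {n : WithTop ℕ∞} {f : 𝔼 → ℝ} (hf : ContDiff ℝ n f) (hn : 1 ≤ n) :
    Continuous (gradient f) :=
  (LinearIsometryEquiv.continuous _).comp (hf.continuous_fderiv (ne_of_gt (lt_of_lt_of_le zero_lt_one hn)))

lemma grad_inner_sum {h ρ : 𝔼 → ℝ} (x : 𝔼) :
    ∑ i, fderiv ℝ h x (EuclideanSpace.single i 1) * fderiv ℝ ρ x (EuclideanSpace.single i 1)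
      = inner ℝ (gradient h x) (gradient ρ x) := by
  rw [PiLp.inner_apply]
  refine Finset.sum_congr rfl fun i _ => ?_
  rw [grad_coord, grad_coord]
  simp [mul_comm]

lemma hcs_aux {k h : 𝔼 → ℝ} (hc : HasCompactSupport h)
    (hz : ∀ x, x ∉ tsupport h → k x = 0) : HasCompactSupport k :=
  hc.mono' fun x hx => by_contra fun hm => hx (hz x hm)

lemma poincare {Ω : Set 𝔼} (b : ℝ) (hb : 0 < b)
    (ρ : 𝔼 → ℝ) (hρ : ContDiff ℝ 2 ρ)
    (hgrad : ∀ x ∈ Ω, ‖gradient ρ x‖ ≤ 1)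
    (hlap : ∀ x ∈ Ω, b ≤ eucLap ρ x)
    {h : 𝔼 → ℝ} (hh : ContDiff ℝ (⊤ : ℕ∞) h) (hhc : HasCompactSupport h)
    (hhs : tsupport h ⊆ Ω) :
    (b / 2) ^ 2 * ∫ x in Ω, h x ^ 2 ≤ ∫ x in Ω, ‖gradient h x‖ ^ 2 := by
  set σ : 𝔼 → ℝ := fun x => inner ℝ (gradient h x) (gradient ρ x) with hσdef
  set A : ℝ := ∫ x, h x ^ 2 with hAdef
  set B : ℝ := ∫ x, ‖gradient h x‖ ^ 2 with hBdef
  have hzero : ∀ x, x ∉ Ω → h x = 0 := fun x hx =>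
    image_eq_zero_of_notMem_tsupport (fun hm => hx (hhs hm))
  have hgzero : ∀ x, x ∉ Ω → gradient h x = 0 := fun x hx =>
    grad_zero_of_nmem (fun hm => hx (hhs hm))
  -- continuity facts
  have hρ1 : ∀ i : Fin d, ContDiff ℝ 1 (fun y => fderiv ℝ ρ y (EuclideanSpace.single i 1)) :=
    fun i => (hρ.fderiv_right (by norm_num)).clm_apply contDiff_const
  have hlapcont : Continuous (eucLap ρ) := by
    unfold eucLap
    exact continuous_finset_sum _ fun i _ =>
      ((hρ1 i).continuous_fderiv (by simp)).clm_apply continuous_const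
  have hgh : Continuous (gradient h) := grad_continuous' hh (by simp)
  have hgρ : Continuous (gradient ρ) := grad_continuous' hρ (by norm_num)
  have hσcont : Continuous σ := hgh.inner hgρ
  have hcont := hh.continuous
  -- integrability facts
  have ihsq : Integrable (fun x => h x ^ 2) :=
    (hcont.pow 2).integrable_of_hasCompactSupport
      (hcs_aux hhc fun x hx => by simp [image_eq_zero_of_notMem_tsupport hx])
  have igrad : Integrable (fun x => ‖gradient h x‖ ^ 2) :=
    (hgh.norm.pow 2).integrable_of_hasCompactSupport
      (hcs_aux hhc fun x hx => by simp [grad_zero_of_nmem hx])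
  have ihlap : Integrable (fun x => h x ^ 2 * eucLap ρ x) :=
    ((hcont.pow 2).mul hlapcont).integrable_of_hasCompactSupport
      (hcs_aux hhc fun x hx => by simp [image_eq_zero_of_notMem_tsupport hx])
  have ihσ : Integrable (fun x => h x * σ x) :=
    (hcont.mul hσcont).integrable_of_hasCompactSupport
      (hcs_aux hhc fun x hx => by simp [image_eq_zero_of_notMem_tsupport hx])
  -- set integral to full integral
  have hA : ∫ x in Ω, h x ^ 2 = A :=
    setIntegral_eq_integral_of_forall_compl_eq_zero fun x hx => by simp [hzero x hx]
  have hB : ∫ x in Ω, ‖gradient h x‖ ^ 2 = B :=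
    setIntegral_eq_integral_of_forall_compl_eq_zero fun x hx => by simp [hgzero x hx]
  -- Step 1 : b * A ≤ ∫ h² Δρ
  have step1 : b * A ≤ ∫ x, h x ^ 2 * eucLap ρ x := by
    rw [hAdef, ← integral_const_mul]
    refine integral_mono (ihsq.const_mul b) ihlap fun x => ?_
    by_cases hx : x ∈ Ω
    · nlinarith [hlap x hx, sq_nonneg (h x)]
    · simp [hzero x hx]
  -- Step 2 : integration by parts
  have hdiff : Differentiable ℝ h := hh.differentiable (by simp)
  have hfd : ∀ (x v : 𝔼), fderiv ℝ (fun y => h y ^ 2) x v = 2 * (h x * fderiv ℝ h x v) := by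
    intro x v
    have hrw : (fun y => h y ^ 2) = fun y => h y * h y := by funext y; ring
    rw [hrw, fderiv_fun_mul (hdiff x) (hdiff x)]
    simp only [ContinuousLinearMap.add_apply, ContinuousLinearMap.coe_smul',
      Pi.smul_apply, smul_eq_mul]
    ring
  have hsqsmooth : ContDiff ℝ (⊤ : ℕ∞) (fun y => h y ^ 2) := hh.pow 2
  have step2 : (∫ x, h x ^ 2 * eucLap ρ x) = -2 * ∫ x, h x * σ x := by
    have hterm : ∀ i : Fin d, Integrable (fun x => h x ^ 2 *
        fderiv ℝ (fun y => fderiv ℝ ρ y (EuclideanSpace.single i 1)) x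
          (EuclideanSpace.single i 1)) := by
      intro i
      refine ((hcont.pow 2).mul
        (((hρ1 i).continuous_fderiv (by simp)).clm_apply continuous_const)).integrable_of_hasCompactSupport
        (hcs_aux hhc fun x hx => by simp [image_eq_zero_of_notMem_tsupport hx])
    have expand : (∫ x, h x ^ 2 * eucLap ρ x) = ∑ i, ∫ x, h x ^ 2 *
        fderiv ℝ (fun y => fderiv ℝ ρ y (EuclideanSpace.single i 1)) x
          (EuclideanSpace.single i 1) := by
      rw [← integral_finset_sum _ (fun i _ => hterm i)]
      congr 1
      funext x
      rw [eucLap, Finset.mul_sum]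
    have ibp : ∀ i : Fin d, (∫ x, h x ^ 2 *
        fderiv ℝ (fun y => fderiv ℝ ρ y (EuclideanSpace.single i 1)) x
          (EuclideanSpace.single i 1)) =
        -∫ x, 2 * (h x * (fderiv ℝ h x (EuclideanSpace.single i 1) *
          fderiv ℝ ρ x (EuclideanSpace.single i 1))) := by
      intro i
      set v := EuclideanSpace.single (𝕜 := ℝ) i (1 : ℝ) with hv
      set g : 𝔼 → ℝ := fun y => fderiv ℝ ρ y v with hg
      have hcg : Continuous g := (hρ1 i).continuous
      have i1 : Integrable (fun x => fderiv ℝ (fun y => h y ^ 2) x v * g x) := by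
        refine Integrable.congr (f := fun x => 2 * (h x * fderiv ℝ h x v) * g x) ?_ ?_
        · refine ((continuous_const.mul (hcont.mul
            ((hh.continuous_fderiv (by simp)).clm_apply continuous_const))).mul
            hcg).integrable_of_hasCompactSupport
            (hcs_aux hhc fun x hx => by simp [image_eq_zero_of_notMem_tsupport hx])
        · exact Filter.Eventually.of_forall fun x => by simp only [hfd]
      have i2 : Integrable (fun x => h x ^ 2 * fderiv ℝ g x v) := hterm i
      have i3 : Integrable (fun x => h x ^ 2 * g x) :=
        ((hcont.pow 2).mul hcg).integrable_of_hasCompactSupport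
          (hcs_aux hhc fun x hx => by simp [image_eq_zero_of_notMem_tsupport hx])
      have hdg : Differentiable ℝ g := ((hρ1 i).differentiable (by simp))
      have hdsq : Differentiable ℝ (fun y => h y ^ 2) := hdiff.pow 2
      have := integral_mul_fderiv_eq_neg_fderiv_mul_of_integrable i1 i2 i3 (fun x _ => hdsq x) (fun x _ => hdg x)
      rw [this]
      congr 1
      refine integral_congr_ae (Filter.Eventually.of_forall fun x => ?_)
      simp only [hfd]
      ring
    rw [expand]
    have : ∀ i : Fin d, (∫ x, h x ^ 2 *
        fderiv ℝ (fun y => fderiv ℝ ρ y (EuclideanSpace.single i 1)) x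
          (EuclideanSpace.single i 1)) =
        -2 * ∫ x, h x * (fderiv ℝ h x (EuclideanSpace.single i 1) *
          fderiv ℝ ρ x (EuclideanSpace.single i 1)) := by
      intro i
      rw [ibp i, integral_const_mul, neg_mul_eq_neg_mul]
    rw [Finset.sum_congr rfl fun i _ => this i, ← Finset.mul_sum]
    congr 1
    have iTi : ∀ i : Fin d, Integrable (fun x => h x * ((fderiv ℝ h x) (EuclideanSpace.single i 1)
        * (fderiv ℝ ρ x) (EuclideanSpace.single i 1))) := by
      intro i
      refine (hcont.mul (((hh.continuous_fderiv (by simp)).clm_apply continuous_const).mul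
        ((hρ1 i).continuous))).integrable_of_hasCompactSupport
        (hcs_aux hhc fun x hx => by simp [image_eq_zero_of_notMem_tsupport hx])
    rw [← integral_finset_sum _ (fun i _ => iTi i)]
    refine integral_congr_ae (Filter.Eventually.of_forall fun x => ?_)
    simp only [← Finset.mul_sum]
    rw [grad_inner_sum]
  -- Step 3 : pointwise Cauchy-Schwarz and AM-GM
  have key0 : ∀ u y : ℝ, 0 ≤ u → 0 ≤ y → 2 * (u * y) ≤ b / 2 * u ^ 2 + 2 / b * y ^ 2 := by
    intro u y hu hy
    rw [div_mul_eq_mul_div, div_mul_eq_mul_div, div_add_div _ _ two_ne_zero (ne_of_gt hb),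
      le_div_iff₀ (by positivity)]
    nlinarith [sq_nonneg (b * u - 2 * y)]
  have step3 : (∫ x, -2 * (h x * σ x)) ≤
      ∫ x, (b / 2 * h x ^ 2 + 2 / b * ‖gradient h x‖ ^ 2) := by
    refine integral_mono (ihσ.const_mul (-2))
      ((ihsq.const_mul _).add (igrad.const_mul _)) fun x => ?_
    by_cases hx : x ∈ Ω
    · have h1 : |σ x| ≤ ‖gradient h x‖ * ‖gradient ρ x‖ := abs_real_inner_le_norm _ _
      have h2 := hgrad x hx
      have e2 : |σ x| ≤ ‖gradient h x‖ := by
        nlinarith [norm_nonneg (gradient h x), norm_nonneg (gradient ρ x)]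
      have e1 : -2 * (h x * σ x) ≤ 2 * (|h x| * |σ x|) := by
        rw [← abs_mul]
        nlinarith [neg_abs_le (h x * σ x)]
      have e3 : 2 * (|h x| * |σ x|) ≤ 2 * (|h x| * ‖gradient h x‖) := by
        nlinarith [abs_nonneg (h x)]
      have e4 := key0 |h x| ‖gradient h x‖ (abs_nonneg _) (norm_nonneg _)
      calc -2 * (h x * σ x) ≤ 2 * (|h x| * ‖gradient h x‖) := le_trans e1 e3
        _ ≤ b / 2 * |h x| ^ 2 + 2 / b * ‖gradient h x‖ ^ 2 := e4
        _ = b / 2 * h x ^ 2 + 2 / b * ‖gradient h x‖ ^ 2 := by rw [sq_abs]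
    · simp [hzero x hx, hgzero x hx]
  have hsplit : (∫ x, (b / 2 * h x ^ 2 + 2 / b * ‖gradient h x‖ ^ 2))
      = b / 2 * A + 2 / b * B := by
    rw [integral_add (ihsq.const_mul _) (igrad.const_mul _), integral_const_mul,
      integral_const_mul]
  have step4 : b * A ≤ b / 2 * A + 2 / b * B := by
    calc b * A ≤ ∫ x, h x ^ 2 * eucLap ρ x := step1
      _ = -2 * ∫ x, h x * σ x := step2
      _ = ∫ x, -2 * (h x * σ x) := (integral_const_mul (-2 : ℝ) _).symm
      _ ≤ ∫ x, (b / 2 * h x ^ 2 + 2 / b * ‖gradient h x‖ ^ 2) := step3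
      _ = b / 2 * A + 2 / b * B := hsplit
  -- conclusion
  rw [hA, hB]
  have hAnn : (0:ℝ) ≤ A := integral_nonneg fun x => sq_nonneg _
  have h5 : (b/2) * ((b/2) * A) ≤ (b/2) * ((2/b) * B) := by
    apply mul_le_mul_of_nonneg_left _ (by positivity)
    linarith
  have h6 : (b/2) * ((2/b) * B) = B := by field_simp
  calc (b/2)^2 * A = (b/2) * ((b/2) * A) := by ring
    _ ≤ (b/2) * ((2/b) * B) := h5
    _ = B := h6
end Aux

lemma iter_props {d : ℕ} {g : EuclideanSpace ℝ (Fin d) → ℝ} (hg : ContDiff ℝ (⊤ : ℕ∞) g)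
    (hc : HasCompactSupport g) (m : ℕ) :
    ContDiff ℝ (⊤ : ℕ∞) (eucLap^[m] g) ∧ HasCompactSupport (eucLap^[m] g) ∧
      tsupport (eucLap^[m] g) ⊆ tsupport g := by
  induction m with
  | zero => exact ⟨hg, hc, subset_rfl⟩
  | succ n ih =>
    rw [Function.iterate_succ_apply']
    exact ⟨eucLap_contDiff ih.1, eucLap_hcs ih.2.1, subset_trans eucLap_tsupport ih.2.2⟩

/-- given `ρ` with `‖∇ρ‖ ≤ 1` and `Δρ ≥ b` on a bounded open `Ω`, and
assuming `∫_Ω |Δg|² ≥ (b²/4)² ∫_Ω g²` for all `g ∈ C_c^∞(Ω)`, one has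
`∫_Ω ‖∇(Δ^m f)‖² ≥ (b/2)^{4m+2} ∫_Ω f²` for every `m ≥ 0` and `f ∈ C_c^∞(Ω)`. -/
theorem stmt4 (d : ℕ) (hd : 1 ≤ d)
    (Ω : Set (EuclideanSpace ℝ (Fin d))) (hΩo : IsOpen Ω)
    (hΩb : Bornology.IsBounded Ω)
    (b : ℝ) (hb : 0 < b)
    (ρ : EuclideanSpace ℝ (Fin d) → ℝ) (hρ : ContDiff ℝ 2 ρ)
    (hgrad : ∀ x ∈ Ω, ‖gradient ρ x‖ ≤ 1)
    (hlap : ∀ x ∈ Ω, b ≤ eucLap ρ x)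
    (h2 : ∀ g : EuclideanSpace ℝ (Fin d) → ℝ, ContDiff ℝ (⊤ : ℕ∞) g →
      HasCompactSupport g → tsupport g ⊆ Ω →
      (b ^ 2 / 4) ^ 2 * ∫ x in Ω, g x ^ 2 ≤ ∫ x in Ω, (eucLap g x) ^ 2) :
    ∀ (m : ℕ) (f : EuclideanSpace ℝ (Fin d) → ℝ), ContDiff ℝ (⊤ : ℕ∞) f →
      HasCompactSupport f → tsupport f ⊆ Ω →
      (b / 2) ^ (4 * m + 2) * ∫ x in Ω, f x ^ 2 ≤
        ∫ x in Ω, ‖gradient (eucLap^[m] f) x‖ ^ 2 := by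
  intro m f hf hc hs
  have claim : ∀ (k : ℕ) (g : EuclideanSpace ℝ (Fin d) → ℝ), ContDiff ℝ (⊤ : ℕ∞) g →
      HasCompactSupport g → tsupport g ⊆ Ω →
      (b / 2) ^ (4 * k) * ∫ x in Ω, g x ^ 2 ≤ ∫ x in Ω, (eucLap^[k] g) x ^ 2 := by
    intro k
    induction k with
    | zero => intro g hg hcg hsg; simp
    | succ n ih =>
      intro g hg hcg hsg
      have hLg : ContDiff ℝ (⊤ : ℕ∞) (eucLap g) := eucLap_contDiff hg
      have hLc : HasCompactSupport (eucLap g) := eucLap_hcs hcg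
      have hLs : tsupport (eucLap g) ⊆ Ω := subset_trans eucLap_tsupport hsg
      have h24 : ((b ^ 2 / 4) ^ 2 : ℝ) = (b / 2) ^ 4 := by ring
      have hstep := h2 g hg hcg hsg
      calc (b / 2) ^ (4 * (n + 1)) * ∫ x in Ω, g x ^ 2
          = (b / 2) ^ (4 * n) * ((b / 2) ^ 4 * ∫ x in Ω, g x ^ 2) := by
            rw [show 4 * (n + 1) = 4 * n + 4 by ring, pow_add]; ring
        _ ≤ (b / 2) ^ (4 * n) * ∫ x in Ω, (eucLap g x) ^ 2 := by
            apply mul_le_mul_of_nonneg_left _ (by positivity)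
            rw [← h24]; exact hstep
        _ ≤ ∫ x in Ω, (eucLap^[n] (eucLap g)) x ^ 2 := ih (eucLap g) hLg hLc hLs
        _ = ∫ x in Ω, (eucLap^[n + 1] g) x ^ 2 := by rw [← Function.iterate_succ_apply]
  have hp := iter_props hf hc m
  have hps : tsupport (eucLap^[m] f) ⊆ Ω := subset_trans hp.2.2 hs
  have hpoin := poincare b hb ρ hρ hgrad hlap hp.1 hp.2.1 hps
  have hcl := claim m f hf hc hs
  calc (b / 2) ^ (4 * m + 2) * ∫ x in Ω, f x ^ 2
      = (b / 2) ^ 2 * ((b / 2) ^ (4 * m) * ∫ x in Ω, f x ^ 2) := by rw [pow_add]; ring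
    _ ≤ (b / 2) ^ 2 * ∫ x in Ω, (eucLap^[m] f) x ^ 2 :=
        mul_le_mul_of_nonneg_left hcl (by positivity)
    _ ≤ ∫ x in Ω, ‖gradient (eucLap^[m] f) x‖ ^ 2 := hpoin
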